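/- Let q be a positive integer, p an integer with gcd(p,q) = 1, and let α, β, α', β' be complex numbers of modulus 1. Then there exists a unitary operator U on ℂ^{ℤ/qℤ} with U A_α U⁻¹ = A_{α'} and U B_β U⁻¹ = B_{β'} if and only if α^q = α'^q and β^q = β'^q. (Thus the pair (α^q, β^q) determines the corresponding q-dimensional unitary representation of the discrete Heisenberg group up to unitary equivalence.) -/

import Mathlib

open Real

/-- The operator `A_α` on `ℂ^{ℤ/qℤ}`: `(A_α φ)(k) = α · φ(k+1)`. -/
noncomputable def Aop (q : ℕ) [NeZero q] (α : ℂ) (φ : EuclideanSpace ℂ (ZMod q)) :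
    EuclideanSpace ℂ (ZMod q) :=
  WithLp.toLp 2 fun k => α * φ (k + 1)

/-- The operator `B_β` on `ℂ^{ℤ/qℤ}`: `(B_β φ)(k) = β · γ^k · φ(k)` with `γ = e^{2πip/q}`. -/
noncomputable def Bop (q : ℕ) [NeZero q] (p : ℤ) (β : ℂ) (φ : EuclideanSpace ℂ (ZMod q)) :
    EuclideanSpace ℂ (ZMod q) :=
  WithLp.toLp 2 fun k => β * Complex.exp (2 * (π : ℂ) * Complex.I * (p : ℂ) / (q : ℂ)) ^ k.val * φ k

lemma hq0 (q : ℕ) [NeZero q] : (q : ℂ) ≠ 0 := Nat.cast_ne_zero.2 (NeZero.ne q)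

lemma gamma_pow_q (q : ℕ) [NeZero q] (p : ℤ) :
    Complex.exp (2 * (π : ℂ) * Complex.I * (p : ℂ) / (q : ℂ)) ^ q = 1 := by
  rw [← Complex.exp_nat_mul]
  have : (q : ℂ) * (2 * (π : ℂ) * Complex.I * (p : ℂ) / (q : ℂ)) = p * (2 * π * Complex.I) := by
    field_simp [hq0 q]
  rw [this, Complex.exp_int_mul_two_pi_mul_I]

lemma gamma_prim (q : ℕ) [NeZero q] (p : ℤ) (hcop : Int.gcd p (q : ℤ) = 1) :
    IsPrimitiveRoot (Complex.exp (2 * (π : ℂ) * Complex.I * (p : ℂ) / (q : ℂ))) q := by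
  have h0 := Complex.isPrimitiveRoot_exp q (NeZero.ne q)
  have h1 := h0.zpow_of_gcd_eq_one p (by simpa using hcop)
  have e : Complex.exp (2 * (π : ℂ) * Complex.I * (p : ℂ) / (q : ℂ))
      = Complex.exp (2 * (π : ℂ) * Complex.I / (q : ℂ)) ^ p := by
    rw [← Complex.exp_int_mul]
    ring_nf
  rw [e]; exact h1

lemma pow_mod_eq {z : ℂ} {q : ℕ} (hz : z ^ q = 1) {a b : ℕ} (h : a % q = b % q) :
    z ^ a = z ^ b := by
  conv_lhs => rw [← Nat.div_add_mod a q]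
  conv_rhs => rw [← Nat.div_add_mod b q]
  rw [pow_add, pow_add, pow_mul, pow_mul, hz, one_pow, one_pow, h]

lemma Aop_iter (q : ℕ) [NeZero q] (α : ℂ) (n : ℕ) (φ : EuclideanSpace ℂ (ZMod q)) (k : ZMod q) :
    (Aop q α)^[n] φ k = α ^ n * φ (k + (n : ZMod q)) := by
  induction n generalizing φ k with
  | zero => rw [Function.iterate_zero_apply, pow_zero, one_mul, Nat.cast_zero, add_zero]
  | succ n ih =>
    rw [Function.iterate_succ_apply']
    show α * ((Aop q α)^[n] φ) (k + 1) = _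
    rw [ih]
    have : k + 1 + (n : ZMod q) = k + ((n : ℕ) + 1 : ℕ) := by push_cast; ring
    rw [this]; ring

lemma Bop_iter (q : ℕ) [NeZero q] (p : ℤ) (β : ℂ) (n : ℕ) (φ : EuclideanSpace ℂ (ZMod q))
    (k : ZMod q) :
    (Bop q p β)^[n] φ k
      = (β * Complex.exp (2 * (π : ℂ) * Complex.I * (p : ℂ) / (q : ℂ)) ^ k.val) ^ n * φ k := by
  induction n generalizing φ with
  | zero => simp
  | succ n ih =>
    rw [Function.iterate_succ_apply']
    show β * _ ^ k.val * ((Bop q p β)^[n] φ) k = _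
    rw [ih]
    ring

/-- For `gcd(p,q)=1` and unimodular `α, β, α', β'`, there is a unitary `U` on
`ℂ^{ℤ/qℤ}` with `U A_α U⁻¹ = A_{α'}` and `U B_β U⁻¹ = B_{β'}` iff `α^q = α'^q` and `β^q = β'^q`. -/
theorem unitary_equivalence_iff_qth_powers (q : ℕ) [NeZero q] (p : ℤ)
    (hcop : Int.gcd p (q : ℤ) = 1) (α β α' β' : ℂ)
    (hα : ‖α‖ = 1) (hβ : ‖β‖ = 1) (hα' : ‖α'‖ = 1) (hβ' : ‖β'‖ = 1) :
    (∃ U : EuclideanSpace ℂ (ZMod q) ≃ₗᵢ[ℂ] EuclideanSpace ℂ (ZMod q),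
      (∀ φ : EuclideanSpace ℂ (ZMod q), U (Aop q α (U.symm φ)) = Aop q α' φ) ∧
      (∀ φ : EuclideanSpace ℂ (ZMod q), U (Bop q p β (U.symm φ)) = Bop q p β' φ)) ↔
    (α ^ q = α' ^ q ∧ β ^ q = β' ^ q) := by
  set γ : ℂ := Complex.exp (2 * (π : ℂ) * Complex.I * (p : ℂ) / (q : ℂ)) with hγdef
  have hγq : γ ^ q = 1 := gamma_pow_q q p
  constructor
  · rintro ⟨U, hA, hB⟩
    have iter : ∀ f g : EuclideanSpace ℂ (ZMod q) → EuclideanSpace ℂ (ZMod q),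
        (∀ φ, U (f (U.symm φ)) = g φ) → ∀ (n : ℕ) φ, U (f^[n] (U.symm φ)) = g^[n] φ := by
      intro f g h n
      induction n with
      | zero => intro φ; simp
      | succ n ih =>
        intro φ
        rw [Function.iterate_succ_apply, Function.iterate_succ_apply]
        have : f (U.symm φ) = U.symm (g φ) := by
          apply U.injective; rw [h φ]; simp
        rw [this, ih]
    have hAq := iter _ _ hA q
    have hBq := iter _ _ hB q
    have hAiter : ∀ (a : ℂ) (φ : EuclideanSpace ℂ (ZMod q)),
        (Aop q a)^[q] φ = (a ^ q) • φ := by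
      intro a φ; ext k
      rw [Aop_iter, ZMod.natCast_self, add_zero]
      rfl
    have hBiter : ∀ (b : ℂ) (φ : EuclideanSpace ℂ (ZMod q)),
        (Bop q p b)^[q] φ = (b ^ q) • φ := by
      intro b φ; ext k
      rw [Bop_iter]
      show (b * γ ^ k.val) ^ q * φ k = _
      rw [mul_pow, ← pow_mul, mul_comm k.val q, pow_mul, hγq, one_pow, mul_one]
      rfl
    constructor
    · have h1 := hAq (EuclideanSpace.single (0 : ZMod q) (1 : ℂ))
      rw [hAiter, map_smul, LinearIsometryEquiv.apply_symm_apply, hAiter] at h1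
      have h2 := congrArg (fun x : EuclideanSpace ℂ (ZMod q) => x 0) h1
      simpa [EuclideanSpace.single_apply] using h2
    · have h1 := hBq (EuclideanSpace.single (0 : ZMod q) (1 : ℂ))
      rw [hBiter, map_smul, LinearIsometryEquiv.apply_symm_apply, hBiter] at h1
      have h2 := congrArg (fun x : EuclideanSpace ℂ (ZMod q) => x 0) h1
      simpa [EuclideanSpace.single_apply] using h2
  · rintro ⟨h1, h2⟩
    have hγ0 : γ ≠ 0 := Complex.exp_ne_zero _
    have hα0 : α ≠ 0 := by intro h; rw [h] at hα; simp at hα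
    have hα'0 : α' ≠ 0 := by intro h; rw [h] at hα'; simp at hα'
    have hβ0 : β ≠ 0 := by intro h; rw [h] at hβ; simp at hβ
    have hprim : IsPrimitiveRoot γ q := gamma_prim q p hcop
    have haa : (α / α') ^ q = 1 := by rw [div_pow, h1, div_self (pow_ne_zero _ hα'0)]
    have hbb : (β' / β) ^ q = 1 := by rw [div_pow, ← h2, div_self (pow_ne_zero _ hβ0)]
    obtain ⟨t, -, hct⟩ := hprim.eq_pow_of_pow_eq_one haa
    obtain ⟨s, -, hds⟩ := hprim.eq_pow_of_pow_eq_one hbb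
    set c : ℂ := γ ^ t with hcdef
    have hc0 : c ≠ 0 := pow_ne_zero _ hγ0
    have hcnorm : ‖c‖ = 1 := by rw [hct, norm_div, hα, hα']; norm_num
    have hcq : c ^ q = 1 := by rw [hcdef, ← pow_mul, mul_comm, pow_mul, hγq, one_pow]
    have hcα : c * α' = α := by rw [hct]; field_simp
    have hdβ : γ ^ s * β = β' := by rw [hds]; field_simp
    set s' : ZMod q := ((s : ℕ) : ZMod q) with hs'def
    obtain ⟨U, hUap, hUsap⟩ : ∃ U : EuclideanSpace ℂ (ZMod q) ≃ₗᵢ[ℂ] EuclideanSpace ℂ (ZMod q),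
        (∀ (φ : EuclideanSpace ℂ (ZMod q)) (k : ZMod q), U φ k = c ^ k.val * φ (k + s')) ∧
        (∀ (ψ : EuclideanSpace ℂ (ZMod q)) (k : ZMod q),
          U.symm ψ k = (c ^ (k - s').val)⁻¹ * ψ (k - s')) := by
      refine ⟨⟨⟨⟨⟨fun φ => WithLp.toLp 2 fun k => c ^ k.val * φ (k + s'), ?_⟩, ?_⟩,
        fun ψ => WithLp.toLp 2 fun k => (c ^ (k - s').val)⁻¹ * ψ (k - s'), ?_, ?_⟩, ?_⟩, fun φ k => rfl,
        fun ψ k => rfl⟩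
      · intro φ ψ; ext k
        show c ^ k.val * (φ + ψ) (k + s') = _
        rw [PiLp.add_apply]
        show _ = c ^ k.val * φ (k + s') + c ^ k.val * ψ (k + s')
        ring
      · intro a φ; ext k
        show c ^ k.val * (a • φ) (k + s') = _
        rw [PiLp.smul_apply]
        show _ = a • (c ^ k.val * φ (k + s'))
        simp only [smul_eq_mul]; ring
      · intro φ; ext k
        show (c ^ (k - s').val)⁻¹ * (c ^ (k - s').val * φ (k - s' + s')) = φ k
        rw [sub_add_cancel, inv_mul_cancel_left₀ (pow_ne_zero _ hc0)]
      · intro ψ; ext k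
        show c ^ k.val * ((c ^ (k + s' - s').val)⁻¹ * ψ (k + s' - s')) = ψ k
        rw [add_sub_cancel_right, mul_inv_cancel_left₀ (pow_ne_zero _ hc0)]
      · intro φ
        rw [EuclideanSpace.norm_eq, EuclideanSpace.norm_eq]
        congr 1
        rw [← Equiv.sum_comp (Equiv.addRight s') (fun j => ‖φ j‖ ^ 2)]
        refine Finset.sum_congr rfl fun k _ => ?_
        show ‖c ^ k.val * φ (k + s')‖ ^ 2 = ‖φ (k + s')‖ ^ 2
        rw [norm_mul, norm_pow, hcnorm, one_pow, one_mul]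
    refine ⟨U, ?_, ?_⟩
    · intro φ; ext k
      rw [hUap]
      show c ^ k.val * (α * U.symm φ (k + s' + 1)) = α' * φ (k + 1)
      rw [hUsap]
      have e1 : k + s' + 1 - s' = k + 1 := by ring
      rw [e1]
      have e2 : c ^ (k + 1).val = c ^ (k.val + 1) := by
        refine pow_mod_eq hcq ?_
        rw [ZMod.val_add, ZMod.val_one_eq_one_mod]
        rw [Nat.add_mod_mod, Nat.mod_mod_of_dvd _ dvd_rfl]
      rw [e2, pow_succ, mul_inv]
      have e3 : c ^ k.val * (α * ((c ^ k.val)⁻¹ * c⁻¹ * φ (k + 1)))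
          = (c ^ k.val * (c ^ k.val)⁻¹) * (c⁻¹ * α * φ (k + 1)) := by ring
      rw [e3, mul_inv_cancel₀ (pow_ne_zero _ hc0), one_mul]
      have e4 : c⁻¹ * α = α' := by
        rw [← hcα, ← mul_assoc, inv_mul_cancel₀ hc0, one_mul]
      rw [e4]
    · intro φ; ext k
      rw [hUap]
      show c ^ k.val * (β * γ ^ (k + s').val * U.symm φ (k + s')) = β' * γ ^ k.val * φ k
      rw [hUsap, add_sub_cancel_right]
      have e2 : γ ^ (k + s').val = γ ^ (k.val + s) := by
        refine pow_mod_eq hγq ?_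
        rw [ZMod.val_add, ZMod.val_natCast]
        rw [Nat.add_mod_mod, Nat.mod_mod_of_dvd _ dvd_rfl]
      rw [e2, pow_add]
      have e3 : c ^ k.val * (β * (γ ^ k.val * γ ^ s) * ((c ^ k.val)⁻¹ * φ k))
          = (c ^ k.val * (c ^ k.val)⁻¹) * ((γ ^ s * β) * γ ^ k.val * φ k) := by ring
      rw [e3, mul_inv_cancel₀ (pow_ne_zero _ hc0), one_mul, hdβ]
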